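/- arXiv:0706.0195 — 6 statements merged into one kernel-verified Lean document; each statement's English description precedes it below -/
import Mathlib

section
/- Let C be a clone on a finite set A for which ≡_C has finitely many classes, and let B be a nonempty subset of A preserved by every operation in C. Then the restriction clone C|_B on B also has finitely many ≡_{C|_B}-classes. -/
/-!
Choose a retraction `r : A → B` (possible since `B` is nonempty) and extend each operation `g`
on `B` to the operation `x ↦ g (r ∘ x)` on `A`. If the extension of `g₁` is a `C`-minor of the
extension of `g₂`, then restricting the inner operations to `B` (which they preserve) exhibits
`g₁` as a `C|_B`-minor of `g₂`. Hence extension induces an injection of the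
`≡_{C|_B}`-classes into the finitely many `≡_C`-classes.
-/

/-- An `n`-indexed operation on `A` has arity `n + 1` (so arities are ≥ 1). -/
abbrev Op (A : Type) (n : ℕ) := (Fin (n + 1) → A) → A

/-- A clone on `A`: a set of finitary operations containing all projections
and closed under composition. -/
structure Clone (A : Type) where
  ops : ∀ n : ℕ, Set (Op A n)
  proj_mem : ∀ (n : ℕ) (i : Fin (n + 1)), (fun x => x i) ∈ ops n
  comp_mem : ∀ {m n : ℕ} (g : Op A m) (h : Fin (m + 1) → Op A n),
      g ∈ ops m → (∀ i, h i ∈ ops n) → (fun x => g fun i => h i x) ∈ ops n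

/-- The set `O_A` of all finitary operations on `A`, of all arities. -/
def Ops (A : Type) := Σ n : ℕ, Op A n

/-- `Minor C f g` : `f` is a `C`-minor of `g`, i.e. `f = g ∘ h` for a tuple `h`
of operations from `C`. -/
def Minor {A : Type} (C : Clone A) (f g : Ops A) : Prop :=
  ∃ h : Fin (g.1 + 1) → Op A f.1,
    (∀ i, h i ∈ C.ops f.1) ∧ f.2 = fun x => g.2 fun i => h i x

/-- `C`-equivalence: each of `f`, `g` is a `C`-minor of the other. -/
def CEquiv {A : Type} (C : Clone A) (f g : Ops A) : Prop :=
  Minor C f g ∧ Minor C g f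

theorem Quot.finite_of_reflect {α β : Type*} {r : α → α → Prop} {s : β → β → Prop}
    (hs : Equivalence s) [Finite (Quot s)] (f : α → β) (hf : ∀ a b, s (f a) (f b) → r a b) :
    Finite (Quot r) := by
  refine Finite.of_injective (fun q : Quot r => Quot.mk s (f q.out)) fun q₁ q₂ h => ?_
  rw [← q₁.out_eq, ← q₂.out_eq]
  exact Quot.sound (hf _ _ (hs.eqvGen_iff.mp (Quot.eqvGen_exact h)))

namespace Minor

variable {A : Type} {C : Clone A}

theorem refl (f : Ops A) : Minor C f f :=
  ⟨fun i x => x i, fun i => C.proj_mem _ i, rfl⟩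

theorem trans {f g k : Ops A} (hfg : Minor C f g) (hgk : Minor C g k) : Minor C f k := by
  obtain ⟨h, hC, hf⟩ := hfg
  obtain ⟨h', hC', hg⟩ := hgk
  refine ⟨fun j x => h' j fun i => h i x, fun j => C.comp_mem _ _ (hC' j) hC, ?_⟩
  rw [hf, hg]

end Minor

theorem CEquiv.equivalence {A : Type} (C : Clone A) : Equivalence (CEquiv C) where
  refl f := ⟨Minor.refl f, Minor.refl f⟩
  symm h := ⟨h.2, h.1⟩
  trans h₁ h₂ := ⟨h₁.1.trans h₂.1, h₂.2.trans h₁.2⟩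

def Ops.extend {A : Type} {B : Set A} (r : A → B) (g : Ops B) : Ops A :=
  ⟨g.1, fun x => g.2 (r ∘ x)⟩

theorem Minor.of_extend {A : Type} {C : Clone A} {B : Set A} {D : Clone B} {r : A → B}
    (hr : Function.LeftInverse r Subtype.val)
    (hpres : ∀ n, ∀ f ∈ C.ops n, ∀ x : Fin (n + 1) → A, (∀ i, x i ∈ B) → f x ∈ B)
    (hD : ∀ n, ∀ f ∈ C.ops n, ∀ g : Op B n,
      (∀ x : Fin (n + 1) → B, (g x : A) = f fun i => (x i : A)) → g ∈ D.ops n)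
    {g₁ g₂ : Ops B} (h : Minor C (g₁.extend r) (g₂.extend r)) : Minor D g₁ g₂ := by
  obtain ⟨h, hC, hext⟩ := h
  let k : Fin (g₂.1 + 1) → Op B g₁.1 := fun i x =>
    ⟨h i fun j => x j, hpres _ _ (hC i) _ fun j => (x j).2⟩
  refine ⟨k, fun i => hD _ _ (hC i) _ fun x => rfl, funext fun x => Subtype.val_injective ?_⟩
  have hx := congrFun hext fun j => (x j : A)
  simp only [Ops.extend, Function.comp_def, hr _] at hx
  convert hx using 3
  exact funext fun i => (hr (k i x)).symm

theorem restriction_clone_finitely_many_classes_general {A : Type}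
    (C : Clone A) (B : Set A) (hB : B.Nonempty)
    (hpres : ∀ n, ∀ f ∈ C.ops n, ∀ x : Fin (n + 1) → A, (∀ i, x i ∈ B) → f x ∈ B)
    (hfin : Finite (Quot (CEquiv C)))
    (D : Clone B)
    (hD : ∀ (n : ℕ) (g : Op (↥B) n), g ∈ D.ops n ↔
      ∃ f ∈ C.ops n, ∀ x : Fin (n + 1) → B, (g x : A) = f fun i => (x i : A)) :
    Finite (Quot (CEquiv D)) := by
  have : Nonempty B := hB.to_subtype
  obtain ⟨r, hr⟩ := Subtype.val_injective.hasLeftInverse (α := B)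
  have hD' : ∀ n, ∀ f ∈ C.ops n, ∀ g : Op B n,
      (∀ x : Fin (n + 1) → B, (g x : A) = f fun i => (x i : A)) → g ∈ D.ops n :=
    fun n f hf g hg => (hD n g).mpr ⟨f, hf, hg⟩
  exact Quot.finite_of_reflect (CEquiv.equivalence C) (Ops.extend r) fun g₁ g₂ h =>
    ⟨.of_extend hr hpres hD' h.1, .of_extend hr hpres hD' h.2⟩

theorem restriction_clone_finitely_many_classes {A : Type} [Finite A]
    (C : Clone A) (B : Set A) (hB : B.Nonempty)
    (hpres : ∀ n, ∀ f ∈ C.ops n, ∀ x : Fin (n + 1) → A, (∀ i, x i ∈ B) → f x ∈ B)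
    (hfin : Finite (Quot (CEquiv C)))
    (D : Clone B)
    (hD : ∀ (n : ℕ) (g : Op (↥B) n), g ∈ D.ops n ↔
      ∃ f ∈ C.ops n, ∀ x : Fin (n + 1) → B, (g x : A) = f fun i => (x i : A)) :
    Finite (Quot (CEquiv D)) :=
  restriction_clone_finitely_many_classes_general C B hB hpres hfin D hD
end

section
/- For any set A, two operations f, g on A are O_A-equivalent if and only if Im(f) = Im(g). Consequently, if A is finite with k elements, there are exactly 2^k − 1 O_A-equivalence classes of operations on A. -/
/-- The clone of all operations on `A`. -/
def fullClone (A : Type) : Clone A where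
  ops := fun _ => Set.univ
  proj_mem := fun _ _ => Set.mem_univ _
  comp_mem := fun _ _ _ _ => Set.mem_univ _

/-! Over the full clone, `f = g ∘ h` is solvable iff every value of `f` is a value of `g`
(choose `h x` as a preimage of `f x`), so equivalence is equality of ranges. The classes are
therefore indexed by the nonempty subsets of `A`, each of which is the range of a unary
retraction onto it. -/

section

variable {A : Type}

theorem minor_fullClone_iff {f g : Ops A} :
    Minor (fullClone A) f g ↔ Set.range f.2 ⊆ Set.range g.2 := by
  constructor
  · rintro ⟨h, -, hf⟩ _ ⟨x, rfl⟩
    exact ⟨fun i => h i x, by rw [hf]⟩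
  · intro hsub
    choose h hh using fun x => hsub ⟨x, rfl⟩
    exact ⟨fun i x => h x i, fun _ => trivial, funext fun x => (hh x).symm⟩

theorem cequiv_fullClone_iff {f g : Ops A} :
    CEquiv (fullClone A) f g ↔ Set.range f.2 = Set.range g.2 := by
  rw [CEquiv, minor_fullClone_iff, minor_fullClone_iff, Set.Subset.antisymm_iff]

theorem exists_op_range_eq {s : Set A} (hs : s.Nonempty) (n : ℕ) :
    ∃ f : Op A n, Set.range f = s := by
  classical
  obtain ⟨a, ha⟩ := hs
  refine ⟨fun x => if x 0 ∈ s then x 0 else a, Set.Subset.antisymm ?_ fun b hb => ⟨fun _ => b, ?_⟩⟩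
  · rintro _ ⟨x, rfl⟩
    dsimp only
    split_ifs with hx
    exacts [hx, ha]
  · simp [hb]

theorem range_range_ops [Nonempty A] :
    Set.range (fun f : Ops A => Set.range f.2) = {s | s.Nonempty} := by
  ext s
  refine ⟨?_, fun hs => ?_⟩
  · rintro ⟨f, rfl⟩
    exact Set.range_nonempty _
  · obtain ⟨f, hf⟩ := exists_op_range_eq hs 0
    exact ⟨⟨0, f⟩, hf⟩

noncomputable def quotCEquivFullCloneEquiv [Nonempty A] :
    Quot (CEquiv (fullClone A)) ≃ {s : Set A // s.Nonempty} :=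
  (Quot.congrRight fun _ _ => cequiv_fullClone_iff).trans
    ((Setoid.quotientKerEquivRange _).trans (Equiv.setCongr range_range_ops))

theorem card_nonempty_sets [Fintype A] :
    Nat.card {s : Set A // s.Nonempty} = 2 ^ Fintype.card A - 1 := by
  classical
  rw [Nat.card_congr (Equiv.subtypeEquivRight fun s => Set.nonempty_iff_ne_empty),
    Nat.card_eq_fintype_card, Fintype.card_subtype_compl, Fintype.card_subtype_eq,
    Fintype.card_set]

end

theorem full_equiv_iff_range_eq_and_card {A : Type} [Fintype A] [Nonempty A] :
    (∀ (B : Type) (f g : Ops B),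
        CEquiv (fullClone B) f g ↔ Set.range f.2 = Set.range g.2) ∧
    Nat.card (Quot (CEquiv (fullClone A))) = 2 ^ Fintype.card A - 1 :=
  ⟨fun _ _ _ => cequiv_fullClone_iff,
    (Nat.card_congr quotCEquivFullCloneEquiv).trans card_nonempty_sets⟩
end

section
/- Let A be a finite set with |A| = k ≥ 2 and let D be the clone generated by the discriminator function on A. Then with d = k^k − k^{k−1} + 1, every operation on A is D-equivalent to a d-ary operation on A. -/
/-- The ternary discriminator as an operation of arity 3 (index 2). -/
def discOp (A : Type) [DecidableEq A] : Op A 2 :=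
  fun x => if x 0 = x 1 then x 2 else x 0

/-!
The discriminator clone contains every operation `x ↦ x (σ p)` in which the selected coordinate
`σ p` depends only on the equality pattern `p` of `x`: branch on the pairs `xᵢ = xⱼ` one at a
time, as `if xᵢ = xⱼ then F else G` lies in the clone whenever `F` and `G` do. So `f` is
`D`-equivalent to a `d`-ary `g` as soon as every tuple `x` can be sent to a `d`-tuple of its own
entries whose equality pattern determines `x` up to a relabelling of its values that `f` does not
notice: `g` recovers a representative of that class from the pattern and applies `f` to it.

Tuples with `b` distinct values, written `x = e ∘ w` with `e : Fin b ↪ A`, fall into at most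
`k ^ (k (k - 1) ⋯ (k - b + 1))` relabelling classes, since the class is fixed by `u ↦ f (u ∘ w)`
on embeddings `u`. The `d`-tuples `e ∘ Fin.append id g` with `g : Fin (d - b) → Fin b` have
`b ^ (d - b)` distinct patterns, and `d = k^k - k^(k-1) + 1` is large enough for `k ≥ 3`.
For `k = 2` only the unordered pair `{f x, f (τ ∘ x)}` matters, `τ` the transposition, and
three patterns of triples suffice.
-/

open Finset Function Equiv

section Pattern

variable {A ι : Type*} [DecidableEq A]

def eqPattern (x : ι → A) (i j : ι) : Bool := decide (x i = x j)

@[simp]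
theorem eqPattern_perm_comp (π : Perm A) (x : ι → A) : eqPattern (π ∘ x) = eqPattern x := by
  ext i j
  simp [eqPattern]

theorem exists_perm_comp_eq_of_eqPattern_eq [Finite A] {x y : ι → A}
    (h : eqPattern x = eqPattern y) : ∃ π : Perm A, ⇑π ∘ x = y := by
  have hxy : ∀ i j, x i = x j ↔ y i = y j := fun i j => by
    simpa [eqPattern] using congrFun (congrFun h i) j
  have hinj : Injective fun a => y (Set.rangeSplitting x a) := fun a a' haa' => by
    apply Subtype.ext
    rw [← Set.apply_rangeSplitting x a, ← Set.apply_rangeSplitting x a']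
    exact (hxy _ _).2 haa'
  obtain ⟨π, hπ⟩ := Perm.exists_extending_pair _ _ Subtype.val_injective hinj
  exact ⟨π, funext fun i =>
    (hπ ⟨x i, i, rfl⟩).trans ((hxy _ _).1 (Set.apply_rangeSplitting x _))⟩

theorem card_image_eq_of_eqPattern_eq [Finite A] [Fintype ι] {y y' : ι → A}
    (h : eqPattern y = eqPattern y') : #(univ.image y) = #(univ.image y') := by
  obtain ⟨π, rfl⟩ := exists_perm_comp_eq_of_eqPattern_eq h
  rw [← image_image, card_image_of_injective _ π.injective]

end Pattern

namespace Clone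

variable {A : Type} [DecidableEq A] {D : Clone A}

theorem disc_mem (hD : discOp A ∈ D.ops 2) {n : ℕ} {F₀ F₁ F₂ : Op A n} (h₀ : F₀ ∈ D.ops n)
    (h₁ : F₁ ∈ D.ops n) (h₂ : F₂ ∈ D.ops n) :
    (fun x => if F₀ x = F₁ x then F₂ x else F₀ x) ∈ D.ops n :=
  D.comp_mem _ ![F₀, F₁, F₂] hD fun i => by fin_cases i <;> assumption

/-- `t(t(xᵢ, xⱼ, F), t(xᵢ, xⱼ, G), G)` is `F` where `xᵢ = xⱼ` and `G` elsewhere. -/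
theorem ite_mem (hD : discOp A ∈ D.ops 2) {n : ℕ} (i j : Fin (n + 1)) {F G : Op A n}
    (hF : F ∈ D.ops n) (hG : G ∈ D.ops n) :
    (fun x => if x i = x j then F x else G x) ∈ D.ops n := by
  have hi := D.proj_mem n i
  have hj := D.proj_mem n j
  convert disc_mem hD (disc_mem hD hi hj hF) (disc_mem hD hi hj hG) hG using 2 with x
  split_ifs <;> simp_all

theorem eqPattern_selector_mem (hD : discOp A ∈ D.ops 2) {n : ℕ}
    (σ : (Fin (n + 1) → Fin (n + 1) → Bool) → Fin (n + 1)) :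
    (fun x => x (σ (eqPattern x))) ∈ D.ops n := by
  suffices h : ∀ (L : List (Fin (n + 1) × Fin (n + 1)))
      (σ : (Fin (n + 1) → Fin (n + 1) → Bool) → Fin (n + 1)),
      (fun x : Fin (n + 1) → A => x (σ fun i j => decide ((i, j) ∈ L ∧ x i = x j))) ∈ D.ops n by
    have h := h (univ : Finset _).toList σ
    simp only [mem_toList, mem_univ, true_and] at h
    exact h
  intro L σ
  induction L generalizing σ with
  | nil => simpa using D.proj_mem n (σ fun _ _ => false)
  | cons p L ih =>
    convert ite_mem hD p.1 p.2 (ih fun m => σ fun i j => m i j || decide ((i, j) = p)) (ih σ)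
      using 2 with x
    split_ifs <;> congr 2 <;> ext i j <;> grind

end Clone

section Relabeling

variable {A ι : Type*} {f : (ι → A) → A} {x y : ι → A}

def IsRelabeling (f : (ι → A) → A) (x y : ι → A) : Prop :=
  ∃ s : Perm A, Set.range y = s '' Set.range x ∧ ∀ ρ : Perm A, f (ρ ∘ y) = f (ρ ∘ s ∘ x)

theorem isRelabeling_perm_comp (f : (ι → A) → A) (x : ι → A) (s : Perm A) :
    IsRelabeling f x (s ∘ x) :=
  ⟨s, Set.range_comp _ _, fun _ => rfl⟩

theorem isRelabeling_of_eqPattern_eq [Finite A] [DecidableEq A] (h : eqPattern x = eqPattern y) :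
    IsRelabeling f x y := by
  obtain ⟨π, rfl⟩ := exists_perm_comp_eq_of_eqPattern_eq h
  exact isRelabeling_perm_comp f x π

end Relabeling

section Decoder

variable {A ι κ : Type*}

theorem exists_comp_eq_of_range_subset {x : ι → A} {z : κ → A} (h : Set.range z ⊆ Set.range x) :
    ∃ p : κ → ι, x ∘ p = z := by
  choose p hp using fun j => h (Set.mem_range_self j)
  exact ⟨p, funext hp⟩

variable [DecidableEq A]

theorem exists_perm_range_comp_eq [Fintype ι] [Fintype κ] {x : ι → A} {y : κ → A}
    (h : #(univ.image y) = #(univ.image x)) : ∃ ψ : Perm A, Set.range (ψ ∘ y) = Set.range x := by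
  obtain ⟨ψ, hψ⟩ := Perm.exists_map_finset_eq _ _ h
  refine ⟨ψ, ?_⟩
  simpa [Set.range_comp] using congrArg (fun s : Finset A => (s : Set A)) hψ

theorem exists_eqPattern_selector [Finite A] {β : Type*} [Nonempty β] {R : (ι → A) → β → Prop}
    (hR : ∀ (π : Perm A) x p, R x p → R (π ∘ x) p) (h : ∀ x, ∃ p, R x p) :
    ∃ σ : (ι → ι → Bool) → β, ∀ x, R x (σ (eqPattern x)) := by
  classical
  refine ⟨fun μ => if hμ : ∃ x, eqPattern x = μ then (h hμ.choose).choose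
    else Classical.arbitrary β, fun x => ?_⟩
  have hμ : ∃ x', eqPattern x' = eqPattern x := ⟨x, rfl⟩
  obtain ⟨π, hπ⟩ := exists_perm_comp_eq_of_eqPattern_eq hμ.choose_spec
  simpa only [dif_pos hμ, hπ] using hR π _ _ (h hμ.choose).choose_spec

theorem exists_decoder [Fintype ι] [Fintype κ] [Nonempty κ] (f : (ι → A) → A)
    (Y : (ι → A) → κ → A) (hcard : ∀ x, #(univ.image (Y x)) = #(univ.image x))
    (hsep : ∀ x x', eqPattern (Y x) = eqPattern (Y x') → IsRelabeling f x x') :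
    ∃ T : (κ → κ → Bool) → ι → κ, ∀ x, ∃ p : κ → ι,
      ∀ ρ : Perm A, f (ρ ∘ x ∘ p ∘ T (eqPattern (x ∘ p))) = f (ρ ∘ x) := by
  classical
  have hrep : ∀ x₀ : ι → A, ∃ (y₀ : κ → A) (t : ι → κ),
      eqPattern y₀ = eqPattern (Y x₀) ∧ Set.range y₀ = Set.range x₀ ∧ y₀ ∘ t = x₀ := by
    intro x₀
    obtain ⟨ψ, hψ⟩ := exists_perm_range_comp_eq (hcard x₀)
    obtain ⟨t, ht⟩ := exists_comp_eq_of_range_subset hψ.ge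
    exact ⟨ψ ∘ Y x₀, t, eqPattern_perm_comp _ _, hψ, ht⟩
  choose y₀ t hy₀ using hrep
  refine ⟨fun ν => if h : ∃ x, eqPattern (Y x) = ν then t h.choose
    else fun _ => Classical.arbitrary κ, fun x => ?_⟩
  have hx : ∃ x', eqPattern (Y x') = eqPattern (Y x) := ⟨x, rfl⟩
  set x₀ := hx.choose
  obtain ⟨hpat, hrange, hcomp⟩ := hy₀ x₀
  obtain ⟨s, hs, hfs⟩ := hsep x₀ x hx.choose_spec
  obtain ⟨p, hp⟩ := exists_comp_eq_of_range_subset (x := x) (z := s ∘ y₀ x₀)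
    (by rw [Set.range_comp, hrange, hs])
  have hν : eqPattern (x ∘ p) = eqPattern (Y x) := by
    rw [hp, eqPattern_perm_comp, hpat, hx.choose_spec]
  have hround : x ∘ p ∘ t x₀ = s ∘ x₀ := by
    rw [← Function.comp_assoc, hp, Function.comp_assoc, hcomp]
  refine ⟨p, fun ρ => ?_⟩
  simp only [hν, dif_pos hx]
  rw [hround, hfs]

end Decoder

namespace Clone

variable {A : Type} [Fintype A] [DecidableEq A] {D : Clone A}

theorem cequiv_of_decoder (hD : discOp A ∈ D.ops 2) {n m : ℕ} (f : Op A n)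
    (T : (Fin (m + 1) → Fin (m + 1) → Bool) → Fin (n + 1) → Fin (m + 1))
    (hT : ∀ x, ∃ p : Fin (m + 1) → Fin (n + 1),
      ∀ ρ : Perm A, f (ρ ∘ x ∘ p ∘ T (eqPattern (x ∘ p))) = f (ρ ∘ x)) :
    CEquiv D ⟨n, f⟩ ⟨m, fun y => f (y ∘ T (eqPattern y))⟩ := by
  obtain ⟨σ, hσ⟩ := exists_eqPattern_selector
    (R := fun x p => ∀ ρ : Perm A, f (ρ ∘ x ∘ p ∘ T (eqPattern (x ∘ p))) = f (ρ ∘ x))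
    (fun π x p hp ρ => by rw [Function.comp_assoc π x p, eqPattern_perm_comp]; exact hp (ρ * π)) hT
  refine ⟨⟨fun i x => x (σ (eqPattern x) i), fun i => eqPattern_selector_mem hD fun μ => σ μ i,
    funext fun x => ?_⟩, ⟨fun j y => y (T (eqPattern y) j),
      fun j => eqPattern_selector_mem hD fun μ => T μ j, rfl⟩⟩
  have h := (hσ x 1).symm
  simp only [Perm.coe_one, Function.id_comp] at h
  exact h

end Clone

section Code

variable {A ι κ : Type*} [DecidableEq A] [Fintype ι] [Fintype κ] {f : (ι → A) → A}

def IsPatternCode (f : (ι → A) → A) {b : ℕ} (Y : {x : ι → A // #(univ.image x) = b} → κ → A) :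
    Prop :=
  ∀ x x', #(univ.image (Y x)) = b ∧ (eqPattern (Y x) = eqPattern (Y x') → IsRelabeling f x x')

theorem exists_code_of_forall_card [Finite A]
    (h : ∀ b, ∃ Y : {x : ι → A // #(univ.image x) = b} → κ → A, IsPatternCode f Y) :
    ∃ Y : (ι → A) → κ → A, (∀ x, #(univ.image (Y x)) = #(univ.image x)) ∧
      ∀ x x', eqPattern (Y x) = eqPattern (Y x') → IsRelabeling f x x' := by
  choose Yb hYb using h
  have hY : ∀ b x (hx : #(univ.image x) = b), Yb b ⟨x, hx⟩ = Yb _ ⟨x, rfl⟩ := by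
    rintro b x rfl
    rfl
  refine ⟨fun x => Yb _ ⟨x, rfl⟩, fun x => (hYb _ ⟨x, rfl⟩ ⟨x, rfl⟩).1, fun x x' hxx' => ?_⟩
  have hb : #(univ.image x') = #(univ.image x) := by
    rw [← (hYb _ ⟨x, rfl⟩ ⟨x, rfl⟩).1, ← (hYb _ ⟨x', rfl⟩ ⟨x', rfl⟩).1]
    exact (card_image_eq_of_eqPattern_eq hxx').symm
  exact (hYb _ ⟨x, rfl⟩ ⟨x', hb⟩).2 (by rw [hY _ x' hb]; exact hxx')

theorem exists_code_of_invariant {b : ℕ} {I J : Type*} [Fintype I] [Fintype J]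
    (c : {x : ι → A // #(univ.image x) = b} → I) (hc : ∀ x x', c x = c x' → IsRelabeling f x x')
    (G : J → κ → A) (hG : Injective (eqPattern ∘ G)) (hGb : ∀ j, #(univ.image (G j)) = b)
    (hIJ : Fintype.card I ≤ Fintype.card J) :
    ∃ Y : {x : ι → A // #(univ.image x) = b} → κ → A, IsPatternCode f Y := by
  obtain ⟨e⟩ := Function.Embedding.nonempty_of_card_le hIJ
  exact ⟨fun x => G (e (c x)), fun x x' => ⟨hGb _, fun h => hc x x' (e.injective (hG h))⟩⟩

theorem exists_code_one [Finite A] [Nonempty κ] (a : A) :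
    ∃ Y : {x : ι → A // #(univ.image x) = 1} → κ → A, IsPatternCode f Y := by
  have hconst : ∀ x : ι → A, #(univ.image x) = 1 → eqPattern x = fun _ _ => true := by
    intro x hx
    obtain ⟨c, hc⟩ := card_eq_one.1 hx
    have hxc : ∀ i, x i = c := fun i => mem_singleton.1 (hc ▸ mem_image_of_mem x (mem_univ i))
    ext i j
    simp [eqPattern, hxc]
  refine exists_code_of_invariant (fun _ => ()) (fun x x' _ => ?_) (fun _ : Unit => fun _ => a)
    (fun _ _ _ => rfl) (fun _ => by rw [image_const univ_nonempty, card_singleton]) le_rfl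
  exact isRelabeling_of_eqPattern_eq ((hconst _ x.2).trans (hconst _ x'.2).symm)

end Code

section Families

variable {A : Type*} [DecidableEq A]

theorem injective_eqPattern_comp_append {b m : ℕ} (e : Fin b ↪ A) :
    Injective fun g : Fin m → Fin b => eqPattern (e ∘ Fin.append id g) := by
  intro g g' h
  funext t
  have := congrFun (congrFun h (Fin.castAdd m (g t))) (Fin.natAdd b t)
  simpa [eqPattern, e.injective.eq_iff, eq_comm] using this

theorem card_image_comp_append {b m : ℕ} (e : Fin b ↪ A) (g : Fin m → Fin b) :
    #(univ.image (e ∘ Fin.append id g)) = b := by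
  have hsurj : Surjective (Fin.append id g) := fun i => ⟨Fin.castAdd m i, by simp⟩
  rw [← image_image, image_univ_of_surjective hsurj, card_image_of_injective _ e.injective,
    card_univ, Fintype.card_fin]

theorem injective_eqPattern_update {d : ℕ} (hd : 3 ≤ d) {a₀ a₁ : A} (h : a₀ ≠ a₁) :
    Injective fun j : Fin d => eqPattern (update (fun _ => a₀) j a₁) := by
  intro j j' hjj'
  by_contra hne
  obtain ⟨i, -, hi⟩ := exists_mem_notMem_of_card_lt_card (s := {j, j'}) (t := univ)
    ((card_le_two).trans_lt (by simp; omega))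
  have := congrFun (congrFun hjj' j) i
  simp_all [eqPattern, update, eq_comm]

theorem card_image_update {d : ℕ} (hd : 2 ≤ d) {a₀ a₁ : A} (h : a₀ ≠ a₁) (j : Fin d) :
    #(univ.image (update (fun _ => a₀) j a₁)) = 2 := by
  obtain ⟨i, hi⟩ := Fintype.exists_ne_of_one_lt_card (by simp; omega) j
  have himage : univ.image (update (fun _ => a₀) j a₁) = {a₁, a₀} := by
    ext a
    simp only [mem_image, mem_univ, true_and, mem_insert, mem_singleton]
    constructor
    · rintro ⟨i, rfl⟩
      by_cases hij : i = j <;> simp [hij]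
    · rintro (rfl | rfl)
      · exact ⟨j, by simp⟩
      · exact ⟨i, by simp [hi]⟩
  rw [himage, card_pair h.symm]

end Families

section Invariants

variable {A ι : Type*} {f : (ι → A) → A}

theorem isRelabeling_embedding_comp {β : Type*} [Finite β] (e e' : β ↪ A) {w w' : ι → β}
    (hw : Surjective w) (hw' : Surjective w') (h : ∀ u : β ↪ A, f (u ∘ w) = f (u ∘ w')) :
    IsRelabeling f (e ∘ w) (e' ∘ w') := by
  obtain ⟨s, hs⟩ := Perm.exists_extending_pair e e' e.injective e'.injective
  have he' : ⇑e' = s ∘ e := funext fun a => (hs a).symm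
  refine ⟨s, by rw [hw'.range_comp, hw.range_comp, ← Set.range_comp, he'], fun ρ => ?_⟩
  calc f (ρ ∘ e' ∘ w') = f (e'.trans ρ.toEmbedding ∘ w') := rfl
    _ = f (ρ ∘ e' ∘ w) := (h _).symm
    _ = f (ρ ∘ s ∘ e ∘ w) := by rw [he']; rfl

variable [DecidableEq A] [Fintype ι]

theorem exists_embedding_comp_surjective {x : ι → A} {b : ℕ} (hx : #(univ.image x) = b) :
    ∃ (e : Fin b ↪ A) (w : ι → Fin b), Surjective w ∧ x = e ∘ w := by
  let φ := (univ.image x).equivFinOfCardEq hx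
  refine ⟨⟨fun i => φ.symm i, fun i j hij => φ.symm.injective (Subtype.ext hij)⟩,
    fun j => φ ⟨x j, mem_image_of_mem x (mem_univ j)⟩, fun i => ?_,
    funext fun j => (congrArg Subtype.val (φ.symm_apply_apply ⟨x j, _⟩)).symm⟩
  obtain ⟨j, -, hj⟩ := mem_image.1 (φ.symm i).2
  exact ⟨j, by simp [hj]⟩

variable [Fintype A]

theorem exists_code_of_pow_le {b m : ℕ} (hb : b ≤ Fintype.card A)
    (hpow : Fintype.card A ^ (Fintype.card A).descFactorial b ≤ b ^ m) :
    ∃ Y : {x : ι → A // #(univ.image x) = b} → Fin (b + m) → A, IsPatternCode f Y := by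
  obtain ⟨e⟩ :=
    Function.Embedding.nonempty_of_card_le (by simpa using hb : Fintype.card (Fin b) ≤ _)
  choose e' w hw hx using fun x : {x : ι → A // #(univ.image x) = b} =>
    exists_embedding_comp_surjective x.2
  refine exists_code_of_invariant (fun x (u : Fin b ↪ A) => f (u ∘ w x)) (fun x x' hxx' => ?_)
    (fun g : Fin m → Fin b => e ∘ Fin.append id g) (injective_eqPattern_comp_append e)
    (card_image_comp_append e) (by simpa [Fintype.card_embedding_eq] using hpow)
  rw [hx x, hx x']
  exact isRelabeling_embedding_comp _ _ (hw x) (hw x') (congrFun hxx')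

theorem exists_code_two (hA : Fintype.card A = 2) {d : ℕ} (hd : 3 ≤ d) :
    ∃ Y : {x : ι → A // #(univ.image x) = 2} → Fin d → A, IsPatternCode f Y := by
  obtain ⟨a₀, a₁, hne⟩ := Fintype.exists_pair_of_one_lt_card (by omega : 1 < Fintype.card A)
  set τ := swap a₀ a₁
  have hperm : ∀ ρ : Perm A, ρ = 1 ∨ ρ = τ := by
    have h1τ : (1 : Perm A) ≠ τ := fun h => hne (by simpa [τ] using congrArg (· a₀) h)
    have huniv : ({1, τ} : Finset (Perm A)) = univ :=
      eq_univ_of_card _ (by rw [card_pair h1τ, Fintype.card_perm, hA]; rfl)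
    intro ρ
    have hρ := mem_univ ρ
    rw [← huniv] at hρ
    simpa using hρ
  have hrange : ∀ x : {x : ι → A // #(univ.image x) = 2}, Set.range (x : ι → A) = Set.univ := by
    intro x
    simpa [Set.eq_univ_iff_forall, eq_univ_iff_forall] using eq_univ_of_card _ (x.2.trans hA.symm)
  refine exists_code_of_invariant (fun x => s(f x, f (τ ∘ x))) (fun x x' hxx' => ?_) _
    (injective_eqPattern_update hd hne) (card_image_update (by omega) hne)
    (by simp [Sym2.card, hA]; omega)
  have key : ∀ s : Perm A, f x' = f (s ∘ x) → f (τ ∘ x') = f (τ ∘ s ∘ x) → IsRelabeling f x x' := by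
    intro s h1 h2
    refine ⟨s, by rw [hrange, hrange, Set.image_univ_of_surjective s.surjective], fun ρ => ?_⟩
    rcases hperm ρ with rfl | rfl
    · exact h1
    · exact h2
  rcases Sym2.eq_iff.1 hxx' with ⟨h1, h2⟩ | ⟨h1, h2⟩
  · exact key 1 h1.symm h2.symm
  · refine key τ h2.symm ?_
    have hττ : ⇑τ ∘ ⇑τ ∘ (x : ι → A) = x := by
      ext i
      simp [τ, swap_apply_self]
    rw [hττ, h1]

end Invariants

theorem descFactorial_lt_pow_pred {k b : ℕ} (hk : 3 ≤ k) (hb : b ≤ k) :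
    k.descFactorial b < k ^ (k - 1) := by
  obtain ⟨j, rfl⟩ : ∃ j, k = j + 1 := ⟨k - 1, by omega⟩
  calc (j + 1).descFactorial b ≤ Nat.factorial (j + 1) := by
        rw [Nat.descFactorial_eq_div hb]; exact Nat.div_le_self _ _
    _ = (j + 1).descFactorial j := by rw [← Nat.descFactorial_self, Nat.descFactorial_succ]; simp
    _ < (j + 1) ^ (j + 1 - 1) := by simpa using Nat.descFactorial_lt_pow (by omega) (by omega)

theorem exists_add_eq_and_pow_descFactorial_le {k b : ℕ} (hk : 3 ≤ k) (hb : 2 ≤ b) (hbk : b ≤ k) :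
    ∃ m, k ^ k - k ^ (k - 1) + 1 = b + m ∧ k ^ k.descFactorial b ≤ b ^ m := by
  have hD := descFactorial_lt_pow_pred hk hbk
  obtain ⟨j, rfl⟩ : ∃ j, k = j + 1 := ⟨k - 1, by omega⟩
  simp only [Nat.add_sub_cancel] at hD ⊢
  set D := (j + 1).descFactorial b
  set P := (j + 1) ^ j
  have hkk : (j + 1) ^ (j + 1) = j * P + P := by rw [pow_succ]; ring
  have hmul : j * D + j ≤ j * P := by nlinarith
  refine ⟨(j + 1) ^ (j + 1) - P + 1 - b, by omega, ?_⟩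
  calc (j + 1) ^ D ≤ (2 ^ j) ^ D := Nat.pow_le_pow_left j.lt_two_pow_self _
    _ = 2 ^ (j * D) := (pow_mul _ _ _).symm
    _ ≤ 2 ^ ((j + 1) ^ (j + 1) - P + 1 - b) := Nat.pow_le_pow_right two_pos (by omega)
    _ ≤ b ^ ((j + 1) ^ (j + 1) - P + 1 - b) := Nat.pow_le_pow_left hb _

theorem exists_pattern_code {A ι : Type*} [Fintype A] [DecidableEq A] [Fintype ι] [Nonempty ι]
    (f : (ι → A) → A) (b : ℕ) :
    ∃ Y : {x : ι → A // #(univ.image x) = b} →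
      Fin (Fintype.card A ^ Fintype.card A - Fintype.card A ^ (Fintype.card A - 1) + 1) → A,
      IsPatternCode f Y := by
  rcases isEmpty_or_nonempty {x : ι → A // #(univ.image x) = b} with hempty | ⟨⟨x, hx⟩⟩
  · exact ⟨isEmptyElim, isEmptyElim⟩
  have hbk : b ≤ Fintype.card A := hx ▸ card_le_univ _
  have hb : 1 ≤ b := hx ▸ card_pos.2 (univ_nonempty.image x)
  obtain rfl | hb2 := eq_or_lt_of_le hb
  · exact exists_code_one (x (Classical.arbitrary ι))
  rcases (by omega : Fintype.card A = 2 ∨ 3 ≤ Fintype.card A) with hA | hA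
  · obtain rfl : b = 2 := by omega
    exact exists_code_two hA (by rw [hA]; norm_num)
  · obtain ⟨m, hm, hpow⟩ := exists_add_eq_and_pow_descFactorial_le hA hb2 hbk
    rw [hm]
    exact exists_code_of_pow_le hbk hpow

theorem main_thm_discriminator_arity_bound_general {A : Type} [Fintype A] [DecidableEq A]
    (D : Clone A) (hD1 : discOp A ∈ D.ops 2)
    (f : Ops A) :
    -- a d-ary operation, where d = k^k - k^(k-1) + 1 (arity index d - 1)
    ∃ g : Op A (Fintype.card A ^ Fintype.card A -
        Fintype.card A ^ (Fintype.card A - 1)),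
      CEquiv D f ⟨_, g⟩ := by
  obtain ⟨n, f⟩ := f
  obtain ⟨Y, hYcard, hYsep⟩ := exists_code_of_forall_card (exists_pattern_code f)
  obtain ⟨T, hT⟩ := exists_decoder f Y hYcard hYsep
  exact ⟨_, D.cequiv_of_decoder hD1 f T hT⟩

theorem main_thm_discriminator_arity_bound {A : Type} [Fintype A] [DecidableEq A]
    (hk : 2 ≤ Fintype.card A)
    (D : Clone A) (hD1 : discOp A ∈ D.ops 2)
    (hD2 : ∀ C : Clone A, discOp A ∈ C.ops 2 → ∀ n, D.ops n ⊆ C.ops n)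
    (f : Ops A) :
    -- a d-ary operation, where d = k^k - k^(k-1) + 1 (arity index d - 1)
    ∃ g : Op A (Fintype.card A ^ Fintype.card A -
        Fintype.card A ^ (Fintype.card A - 1)),
      CEquiv D f ⟨_, g⟩ :=
  main_thm_discriminator_arity_bound_general D hD1 f
end

section
/- For every discriminator clone C on a finite set A (i.e., any clone containing the ternary discriminator function), the C-equivalence relation ≡_C has only finitely many classes in O_A. -/
/-!
Using the discriminator `t (t (xᵢ, xⱼ, F), t (xᵢ, xⱼ, G), G) = if xᵢ = xⱼ then F else G`, the
clone `C` contains every operation defined by cases on the equality pattern of its argument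
tuple; in particular it contains every `x ↦ x (σ x)` whose index `σ x` depends only on that
pattern. Since `|A|` variables realise every equality pattern, the `A`-ary minors
`v ↦ f (v ∘ c)` of `f` see all of `f`: if each of them is also a minor of `g`, then
`f x = g (x ∘ σ x)` for such a pattern-dependent `σ`, so `f` is a `C`-minor of `g`. Hence the
`C`-class of `f` is determined by its set of `A`-ary minors, which lies in the finite type
`Set ((A → A) → A)`.
-/

theorem finite_quot_of_eq_imp {α β : Type*} [Finite β] {r : α → α → Prop} (φ : α → β)
    (h : ∀ a b, φ a = φ b → r a b) : Finite (Quot r) := by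
  refine Finite.of_surjective (fun b : Set.range φ => Quot.mk r b.2.choose) ?_
  rintro ⟨a⟩
  exact ⟨⟨φ a, a, rfl⟩, Quot.sound (h _ _ (Exists.choose_spec (⟨a, rfl⟩ : φ a ∈ Set.range φ)))⟩

def eqPairs {ι α : Type*} [Fintype ι] [DecidableEq α] (x : ι → α) : Finset (ι × ι) :=
  Finset.univ.filter fun q => x q.1 = x q.2

theorem factorsThrough_of_eqPairs_eq {ι α β : Type*} [Fintype ι] [DecidableEq α] [DecidableEq β]
    {x : ι → α} {c : ι → β} (h : eqPairs c = eqPairs x) : x.FactorsThrough c := by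
  intro i j hij
  have hmem : (i, j) ∈ eqPairs c := by simp [eqPairs, hij]
  rw [h] at hmem
  simpa [eqPairs] using hmem

open Classical in
noncomputable def matchIndex {ι κ B : Type*} (c : ι → B) (d : κ → B) (i₀ : ι) (k : κ) : ι :=
  if h : ∃ i, c i = d k then h.choose else i₀

theorem apply_eq_apply_comp_matchIndex {ι κ A B : Type*} {F : (ι → A) → A} {G : (κ → A) → A}
    {c : ι → B} {d : κ → B} (hcd : ∀ v : B → A, G (v ∘ d) = F (v ∘ c))
    {x : ι → A} (hx : x.FactorsThrough c) (i₀ : ι) :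
    F x = G (x ∘ matchIndex c d i₀) := by
  set v := Function.extend c x fun _ => x i₀
  have hvd : v ∘ d = x ∘ matchIndex c d i₀ := by
    funext k
    by_cases h : ∃ i, c i = d k
    · have hmatch : c (matchIndex c d i₀ k) = d k := by
        simpa [matchIndex, h] using h.choose_spec
      simp only [Function.comp_apply, ← hmatch, v, hx.extend_apply]
    · simp [v, matchIndex, h]
  rw [← hvd, hcd, hx.extend_comp]

namespace Clone

variable {A : Type} [DecidableEq A] {C : Clone A}

theorem discOp_comp_mem (hC : discOp A ∈ C.ops 2) {n : ℕ} {F G H : Op A n}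
    (hF : F ∈ C.ops n) (hG : G ∈ C.ops n) (hH : H ∈ C.ops n) :
    (fun x => discOp A ![F x, G x, H x]) ∈ C.ops n := by
  have hmem := C.comp_mem _ ![F, G, H] hC
    (Fin.forall_fin_succ.2 ⟨hF, Fin.forall_fin_two.2 ⟨hG, hH⟩⟩)
  convert hmem using 3 with x
  ext i
  fin_cases i <;> rfl

theorem ite_eq_mem (hC : discOp A ∈ C.ops 2) {n : ℕ} (i j : Fin (n + 1)) {F G : Op A n}
    (hF : F ∈ C.ops n) (hG : G ∈ C.ops n) :
    (fun x => if x i = x j then F x else G x) ∈ C.ops n := by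
  have hproj := C.proj_mem n
  have hmem := discOp_comp_mem hC (discOp_comp_mem hC (hproj i) (hproj j) hF)
    (discOp_comp_mem hC (hproj i) (hproj j) hG) hG
  convert hmem using 2 with x
  by_cases hx : x i = x j <;> by_cases hFG : F x = G x <;> simp [discOp, hx, hFG]

theorem filter_eq_cases_mem (hC : discOp A ∈ C.ops 2) {n : ℕ}
    (s : Finset (Fin (n + 1) × Fin (n + 1))) (Ψ : Finset (Fin (n + 1) × Fin (n + 1)) → Op A n)
    (hΨ : ∀ t, Ψ t ∈ C.ops n) :
    (fun x => Ψ (s.filter fun q => x q.1 = x q.2) x) ∈ C.ops n := by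
  induction s using Finset.induction_on generalizing Ψ with
  | empty => simpa using hΨ ∅
  | insert p s _ ih =>
    convert ite_eq_mem hC p.1 p.2 (ih (fun t => Ψ (insert p t)) fun t => hΨ _) (ih Ψ hΨ)
      using 2 with x
    rw [Finset.filter_insert]
    split_ifs <;> rfl

theorem eqPairs_cases_mem (hC : discOp A ∈ C.ops 2) {n : ℕ}
    (Ψ : Finset (Fin (n + 1) × Fin (n + 1)) → Op A n) (hΨ : ∀ t, Ψ t ∈ C.ops n) :
    (fun x => Ψ (eqPairs x) x) ∈ C.ops n :=
  filter_eq_cases_mem hC Finset.univ Ψ hΨ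

end Clone

def identMinors {A : Type} (f : Ops A) : Set ((A → A) → A) :=
  Set.range fun c : Fin (f.1 + 1) → A => fun v => f.2 (v ∘ c)

theorem minor_of_identMinors_subset {A : Type} [DecidableEq A] {C : Clone A}
    (hC : discOp A ∈ C.ops 2) {f g : Ops A} (h : identMinors f ⊆ identMinors g) :
    Minor C f g := by
  classical
  obtain ⟨m, F⟩ := f
  obtain ⟨m', G⟩ := g
  choose d hd using fun c : Fin (m + 1) → A => h ⟨c, rfl⟩
  let σ : Finset (Fin (m + 1) × Fin (m + 1)) → Fin (m' + 1) → Fin (m + 1) := fun K =>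
    if hK : ∃ c : Fin (m + 1) → A, eqPairs c = K then matchIndex hK.choose (d hK.choose) 0
    else fun _ => 0
  refine ⟨fun k x => x (σ (eqPairs x) k),
    fun k => C.eqPairs_cases_mem hC (fun K x => x (σ K k)) fun _ => C.proj_mem _ _, ?_⟩
  funext x
  have hK : ∃ c : Fin (m + 1) → A, eqPairs c = eqPairs x := ⟨x, rfl⟩
  simp only [σ, dif_pos hK]
  exact apply_eq_apply_comp_matchIndex (fun v => congrFun (hd hK.choose) v)
    (factorsThrough_of_eqPairs_eq hK.choose_spec) 0

theorem discriminator_clone_finitely_many_classes_general {A : Type} [Finite A]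
    [DecidableEq A] (C : Clone A) (hC : discOp A ∈ C.ops 2) :
    Finite (Quot (CEquiv C)) :=
  finite_quot_of_eq_imp identMinors fun _ _ h =>
    ⟨minor_of_identMinors_subset hC h.le, minor_of_identMinors_subset hC h.ge⟩

theorem discriminator_clone_finitely_many_classes {A : Type} [Finite A] [Nonempty A]
    [DecidableEq A] (C : Clone A) (hC : discOp A ∈ C.ops 2) :
    Finite (Quot (CEquiv C)) :=
  discriminator_clone_finitely_many_classes_general C hC
end

section
/- Let A = {0,1}, M the clone of monotone Boolean functions, and f_n(x_1,...,x_n) = x_1 + x_2 + ⋯ + x_n (sum mod 2). Then f_m ≤_M f_n if and only if m ≤ n. Consequently the f_n lie in pairwise distinct M-equivalence classes and ≡_M has infinite index. -/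
/-- The parity (sum mod 2) function of arity `n + 1` on `Fin 2`. -/
def parity (n : ℕ) : Op (Fin 2) n := fun x => ∑ i, x i



theorem minor_iff_exists_monotone {A : Type} [Preorder A] {M : Clone A}
    (hM : ∀ n, M.ops n = {f | Monotone f}) {f g : Ops A} :
    Minor M f g ↔
      ∃ F : (Fin (f.1 + 1) → A) → Fin (g.1 + 1) → A, Monotone F ∧ ∀ x, f.2 x = g.2 (F x) := by
  constructor
  · rintro ⟨h, hmem, hfg⟩
    refine ⟨fun x i => h i x, monotone_lam fun i => ?_, fun x => congrFun hfg x⟩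
    simpa only [hM, Set.mem_ofPred_eq] using hmem i
  · rintro ⟨F, hF, hfg⟩
    refine ⟨fun i x => F x i, fun i => ?_, funext hfg⟩
    rw [hM]
    exact fun x y hxy => hF hxy i

theorem Fintype.sum_update_add_self {ι M : Type*} [Fintype ι] [DecidableEq ι] [AddCommMonoid M]
    (f : ι → M) (i : ι) (b : M) : ∑ j, Function.update f i b j + f i = b + ∑ j, f j := by
  rw [Finset.sum_update_of_mem (Finset.mem_univ i),
    Finset.sum_eq_add_sum_sdiff_singleton_of_mem (Finset.mem_univ i), add_comm (f i), add_assoc]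

section Cube

variable {ι κ : Type*} [Fintype ι] [Fintype κ]

theorem hammingNorm_eq_sum_val (x : ι → Fin 2) : hammingNorm x = ∑ i, (x i : ℕ) := by
  rw [hammingNorm, Finset.card_filter]
  refine Finset.sum_congr rfl fun i _ => ?_
  generalize x i = a
  fin_cases a <;> rfl

theorem hammingNorm_lt_hammingNorm {x y : ι → Fin 2} (hxy : x < y) :
    hammingNorm x < hammingNorm y := by
  obtain ⟨hle, i, hi⟩ := Pi.lt_def.1 hxy
  simp only [hammingNorm_eq_sum_val]
  exact Finset.sum_lt_sum (fun j _ => hle j) ⟨i, Finset.mem_univ i, hi⟩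

theorem hammingNorm_update_zero_add_one [DecidableEq ι] {x : ι → Fin 2} {i : ι}
    (hi : x i = 1) : hammingNorm (Function.update x i 0) + 1 = hammingNorm x := by
  simp only [hammingNorm_eq_sum_val, Function.apply_update (fun _ (a : Fin 2) => (a : ℕ))]
  simpa [hi] using Fintype.sum_update_add_self (fun j => (x j : ℕ)) i 0

theorem sum_update_zero_add_one [DecidableEq ι] {x : ι → Fin 2} {i : ι} (hi : x i = 1) :
    ∑ j, Function.update x i 0 j + 1 = ∑ j, x j := by
  simpa [hi] using Fintype.sum_update_add_self x i 0

theorem hammingNorm_le_hammingNorm_of_monotone {F : (ι → Fin 2) → κ → Fin 2} (hF : Monotone F)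
    (hsum : ∀ x, ∑ k, F x k = ∑ i, x i) (x : ι → Fin 2) : hammingNorm x ≤ hammingNorm (F x) := by
  classical
  induction x using WellFoundedLT.induction with
  | _ x ih =>
  by_cases hx : x = 0
  · simp [hx]
  obtain ⟨i, hi⟩ : ∃ i, x i = 1 := by
    obtain ⟨i, hi⟩ := Function.ne_iff.1 hx
    exact ⟨i, Fin.eq_one_of_ne_zero _ hi⟩
  set y := Function.update x i 0
  have hyx : y < x := update_lt_self_iff.2 (by simp [hi])
  have hFyx : F y < F x := by
    refine lt_of_le_of_ne (hF hyx.le) fun hFeq => ?_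
    have hparity : ∑ j, y j + 1 = ∑ j, x j := sum_update_zero_add_one hi
    rw [← hsum x, ← hFeq, hsum y] at hparity
    exact one_ne_zero (add_eq_left.1 hparity)
  have hy : hammingNorm y + 1 = hammingNorm x := hammingNorm_update_zero_add_one hi
  have := ih y hyx
  have := hammingNorm_lt_hammingNorm hFyx
  omega

theorem card_le_card_of_monotone_of_sum_eq {F : (ι → Fin 2) → κ → Fin 2} (hF : Monotone F)
    (hsum : ∀ x, ∑ k, F x k = ∑ i, x i) : Fintype.card ι ≤ Fintype.card κ :=
  calc Fintype.card ι = hammingNorm (1 : ι → Fin 2) := by simp [hammingNorm]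
    _ ≤ hammingNorm (F 1) := hammingNorm_le_hammingNorm_of_monotone hF hsum 1
    _ ≤ Fintype.card κ := hammingNorm_le_card_fintype

end Cube

def zeroPad {M : Type*} [Zero M] {m n : ℕ} (x : Fin m → M) : Fin n → M :=
  fun k => if hk : (k : ℕ) < m then x ⟨k, hk⟩ else 0

theorem monotone_zeroPad {α : Type*} [Preorder α] [Zero α] {m n : ℕ} :
    Monotone (zeroPad : (Fin m → α) → Fin n → α) := by
  intro x y hxy k
  unfold zeroPad
  split_ifs
  exacts [hxy _, le_rfl]

theorem sum_zeroPad {M : Type*} [AddCommMonoid M] {m n : ℕ} (hmn : m ≤ n) (x : Fin m → M) :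
    ∑ k : Fin n, zeroPad x k = ∑ i, x i := by
  let g : ℕ → M := fun k => if hk : k < m then x ⟨k, hk⟩ else 0
  calc ∑ k : Fin n, g k = ∑ k ∈ Finset.range n, g k := Fin.sum_univ_eq_sum_range g n
    _ = ∑ k ∈ Finset.range m, g k := (Finset.sum_subset (Finset.range_subset_range.2 hmn)
          fun k _ hk => dif_neg (by simpa using hk)).symm
    _ = ∑ i : Fin m, g i := (Fin.sum_univ_eq_sum_range g m).symm
    _ = ∑ i, x i := Finset.sum_congr rfl fun i _ => dif_pos i.isLt

theorem parity_minor_parity_iff {M : Clone (Fin 2)}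
    (hM : ∀ n, M.ops n = {f : Op (Fin 2) n | Monotone f}) (m n : ℕ) :
    Minor M ⟨m, parity m⟩ ⟨n, parity n⟩ ↔ m ≤ n := by
  refine (minor_iff_exists_monotone (f := ⟨m, parity m⟩) (g := ⟨n, parity n⟩) hM).trans ⟨?_, ?_⟩
  · rintro ⟨F, hF, hparity⟩
    simpa using card_le_card_of_monotone_of_sum_eq hF fun x => (hparity x).symm
  · intro hmn
    exact ⟨zeroPad, monotone_zeroPad, fun x => (sum_zeroPad (Nat.add_le_add_right hmn 1) x).symm⟩

theorem monotone_clone_parity {M : Clone (Fin 2)}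
    (hM : ∀ n, M.ops n = {f : Op (Fin 2) n | Monotone f}) :
    (∀ m n : ℕ, Minor M ⟨m, parity m⟩ ⟨n, parity n⟩ ↔ m ≤ n) ∧
    (∀ m n : ℕ, m ≠ n → ¬ CEquiv M ⟨m, parity m⟩ ⟨n, parity n⟩) ∧
    Infinite (Quot (CEquiv M)) := by
  have key := parity_minor_parity_iff hM
  have distinct (m n : ℕ) (hmn : m ≠ n) : ¬ CEquiv M ⟨m, parity m⟩ ⟨n, parity n⟩ := fun h =>
    hmn (le_antisymm ((key m n).1 h.1) ((key n m).1 h.2))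
  refine ⟨key, distinct,
    Infinite.of_injective (fun n : ℕ => Quot.mk (CEquiv M) ⟨n, parity n⟩) fun m n hmn => ?_⟩
  by_contra hne
  exact distinct m n hne ((CEquiv.equivalence M).eqvGen_iff.1 (Quot.eqvGen_exact hmn))
end

section
/- Let T_id be the clone of idempotent Boolean functions (those fixing both constant tuples). For Boolean functions f (n-ary) and g (m-ary): f ≤_{T_id} g if and only if f(0,...,0) = g(0,...,0), f(1,...,1) = g(1,...,1), and Im(f) ⊆ Im(g). Consequently there are exactly 6 T_id-equivalence classes of Boolean functions. -/
/-!
A `T_id`-minor `g ∘ h` agrees with `g` on the constant tuples (the `hᵢ` fix them) and has image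
inside `Im g`. Conversely, if `f` and `g` agree on the constant tuples and `Im f ⊆ Im g`, choose
for each non-constant `x` a tuple `y` with `g y = f x` and let `hᵢ x = yᵢ`; on the constant tuples
let `hᵢ` be constant. Hence the class of `f` is determined by `(f 0̄, f 1̄, Im f)`, and the
possible triples are those with `f 0̄, f 1̄ ∈ Im f ⊆ {0, 1}`: two with `Im f` a singleton and four
with `Im f = {0, 1}`, all realized by binary functions.
-/

section Idempotent

variable {A : Type} {C : Clone A}

theorem Minor.range_subset {f g : Ops A} (hfg : Minor C f g) :
    Set.range f.2 ⊆ Set.range g.2 := by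
  obtain ⟨h, -, hf⟩ := hfg
  rw [hf]
  exact Set.range_comp_subset_range _ g.2

theorem Minor.apply_const_eq {a : A} (hC : ∀ n, ∀ h ∈ C.ops n, h (fun _ => a) = a)
    {f g : Ops A} (hfg : Minor C f g) : f.2 (fun _ => a) = g.2 (fun _ => a) := by
  obtain ⟨h, hmem, hf⟩ := hfg
  rw [hf]
  exact congrArg g.2 (funext fun i => hC _ _ (hmem i))

theorem minor_of_range_subset {a b : A}
    (hC : ∀ n (h : Op A n), h (fun _ => a) = a → h (fun _ => b) = b → h ∈ C.ops n)
    {f g : Ops A} (ha : f.2 (fun _ => a) = g.2 (fun _ => a))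
    (hb : f.2 (fun _ => b) = g.2 (fun _ => b)) (hr : Set.range f.2 ⊆ Set.range g.2) :
    Minor C f g := by
  classical
  choose w hw using fun x => hr (Set.mem_range_self x)
  let h : Fin (g.1 + 1) → Op A f.1 := fun i x =>
    if x = (fun _ => a) then a else if x = (fun _ => b) then b else w x i
  have hab : (fun _ : Fin (f.1 + 1) => b) = (fun _ => a) → b = a := fun e => congrFun e 0
  refine ⟨h, fun i => hC _ _ (by simp [h]) ?_, funext fun x => ?_⟩
  · by_cases e : (fun _ : Fin (f.1 + 1) => b) = (fun _ => a)
    · simp [h, hab e]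
    · simp [h, e]
  · by_cases hxa : x = fun _ => a
    · subst hxa; simpa [h] using ha
    by_cases hxb : x = fun _ => b
    · subst hxb; simpa [h, hxa] using hb
    simpa [h, hxa, hxb] using (hw x).symm

theorem minor_iff_of_ops_eq {a b : A}
    (hC : ∀ n, C.ops n = {f : Op A n | f (fun _ => a) = a ∧ f (fun _ => b) = b}) (f g : Ops A) :
    Minor C f g ↔ f.2 (fun _ => a) = g.2 (fun _ => a) ∧ f.2 (fun _ => b) = g.2 (fun _ => b) ∧
      Set.range f.2 ⊆ Set.range g.2 := by
  refine ⟨fun hfg => ⟨?_, ?_, hfg.range_subset⟩, fun ⟨ha, hb, hr⟩ => ?_⟩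
  · exact hfg.apply_const_eq fun n h hh => ((hC n).le hh).1
  · exact hfg.apply_const_eq fun n h hh => ((hC n).le hh).2
  · exact minor_of_range_subset (fun n h h₁ h₂ => (hC n).ge ⟨h₁, h₂⟩) ha hb hr

theorem cEquiv_iff_of_ops_eq {a b : A}
    (hC : ∀ n, C.ops n = {f : Op A n | f (fun _ => a) = a ∧ f (fun _ => b) = b}) (f g : Ops A) :
    CEquiv C f g ↔ f.2 (fun _ => a) = g.2 (fun _ => a) ∧ f.2 (fun _ => b) = g.2 (fun _ => b) ∧
      Set.range f.2 = Set.range g.2 := by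
  rw [CEquiv, minor_iff_of_ops_eq hC, minor_iff_of_ops_eq hC, Set.Subset.antisymm_iff]
  constructor
  · rintro ⟨⟨ha, hb, hfg⟩, -, -, hgf⟩
    exact ⟨ha, hb, hfg, hgf⟩
  · rintro ⟨ha, hb, hfg, hgf⟩
    exact ⟨⟨ha, hb, hfg⟩, ha.symm, hb.symm, hgf⟩

end Idempotent

section Boolean

def boolInvariant (f : Ops (Fin 2)) : Fin 2 × Fin 2 × Finset (Fin 2) :=
  (f.2 (fun _ => 0), f.2 (fun _ => 1), Finset.univ.image f.2)

def binaryRealizer (u v w : Fin 2) : Ops (Fin 2) :=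
  ⟨1, fun x => if x 0 = x 1 then (if x 0 = 0 then u else v) else w⟩

theorem boolInvariant_binaryRealizer (u v w : Fin 2) :
    boolInvariant (binaryRealizer u v w) = (u, v, {u, v, w}) := by
  revert u v w; decide

theorem range_boolInvariant :
    Set.range boolInvariant = {t | t.1 ∈ t.2.2 ∧ t.2.1 ∈ t.2.2} := by
  ext ⟨u, v, S⟩
  constructor
  · rintro ⟨f, hf⟩
    simp only [boolInvariant, Prod.mk.injEq] at hf
    obtain ⟨rfl, rfl, rfl⟩ := hf
    exact ⟨Finset.mem_image_of_mem _ (Finset.mem_univ _),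
      Finset.mem_image_of_mem _ (Finset.mem_univ _)⟩
  · rintro ⟨hu, hv⟩
    obtain ⟨w, rfl⟩ : ∃ w, S = {u, v, w} := by revert u v S; decide
    exact ⟨_, boolInvariant_binaryRealizer u v w⟩

theorem card_range_boolInvariant : Nat.card (Set.range boolInvariant) = 6 := by
  rw [range_boolInvariant, Nat.card_eq_fintype_card]
  decide

theorem cEquiv_iff_boolInvariant_eq {T : Clone (Fin 2)}
    (hT : ∀ n, T.ops n = {f : Op (Fin 2) n | f (fun _ => 0) = 0 ∧ f (fun _ => 1) = 1})
    (f g : Ops (Fin 2)) :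
    CEquiv T f g ↔ boolInvariant f = boolInvariant g := by
  rw [cEquiv_iff_of_ops_eq hT, boolInvariant, boolInvariant, Prod.mk.injEq, Prod.mk.injEq,
    ← Finset.coe_inj, Fintype.coe_image_univ, Fintype.coe_image_univ]

end Boolean

theorem Tid_minor_description {T : Clone (Fin 2)}
    (hT : ∀ n, T.ops n =
      {f : Op (Fin 2) n | f (fun _ => 0) = 0 ∧ f (fun _ => 1) = 1}) :
    (∀ f g : Ops (Fin 2), Minor T f g ↔
      (f.2 (fun _ => 0) = g.2 (fun _ => 0) ∧ f.2 (fun _ => 1) = g.2 (fun _ => 1) ∧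
        Set.range f.2 ⊆ Set.range g.2)) ∧
    Nat.card (Quot (CEquiv T)) = 6 := by
  refine ⟨minor_iff_of_ops_eq hT, ?_⟩
  calc Nat.card (Quot (CEquiv T)) = Nat.card (Set.range boolInvariant) :=
        Nat.card_congr <| (Quot.congrRight (cEquiv_iff_boolInvariant_eq hT)).trans
          (Setoid.quotientKerEquivRange boolInvariant)
    _ = 6 := card_range_boolInvariant
end
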